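/- Define I₁(N) = ∫₀^π tan(t/2)·(N/π)(1 - t/π)^{N-1} dt and I₂(N) = ∫₀^π tan²(t/2)·(N/π)(1 - t/π)^{N-1} dt. Then lim_{N→∞} N² · ( I₂(N) + I₁(N)² ) = 3π²/4. -/

import Mathlib

open Real MeasureTheory intervalIntegral Filter Set

noncomputable def I₁ (N : ℕ) : ℝ :=
  ∫ t in (0:ℝ)..Real.pi,
    Real.tan (t / 2) * ((N : ℝ) / Real.pi) * (1 - t / Real.pi) ^ (N - 1)

noncomputable def I₂ (N : ℕ) : ℝ :=
  ∫ t in (0:ℝ)..Real.pi,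
    Real.tan (t / 2) ^ 2 * ((N : ℝ) / Real.pi) * (1 - t / Real.pi) ^ (N - 1)

-- cos positive & bounded below on [0, π/4]
lemma cos_big {x : ℝ} (h0 : 0 ≤ x) (h1 : x ≤ π/4) : Real.sqrt 2 / 2 ≤ Real.cos x := by
  rw [← Real.cos_pi_div_four]
  apply Real.cos_le_cos_of_nonneg_of_le_pi h0 _ h1
  linarith [Real.pi_pos]

lemma cos_ne {x : ℝ} (h0 : 0 ≤ x) (h1 : x ≤ π/4) : Real.cos x ≠ 0 := by
  have := cos_big h0 h1
  have h2 : (0:ℝ) < Real.sqrt 2 / 2 := by positivity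
  linarith

lemma tan_le_one {x : ℝ} (h0 : 0 ≤ x) (h1 : x ≤ π/4) : Real.tan x ≤ 1 := by
  rw [← Real.tan_pi_div_four]
  rcases eq_or_lt_of_le h1 with h | h
  · rw [h]
  · exact le_of_lt (Real.tan_lt_tan_of_nonneg_of_lt_pi_div_two h0 (by linarith [Real.pi_pos]) h)

lemma mono_aux {g g' : ℝ → ℝ} (hc : ContinuousOn g (Icc 0 (π/4)))
    (hd : ∀ x ∈ Ioo (0:ℝ) (π/4), HasDerivAt g (g' x) x)
    (hp : ∀ x ∈ Ioo (0:ℝ) (π/4), 0 ≤ g' x) :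
    MonotoneOn g (Icc 0 (π/4)) := by
  apply monotoneOn_of_hasDerivWithinAt_nonneg (convex_Icc _ _) hc
  · intro x hx
    rw [interior_Icc] at hx
    exact (hd x hx).hasDerivWithinAt
  · intro x hx
    rw [interior_Icc] at hx
    exact hp x hx

lemma cont_tan : ContinuousOn Real.tan (Icc 0 (π/4)) := by
  apply ContinuousOn.mono Real.continuousOn_tan
  intro x hx
  exact cos_ne hx.1 hx.2

lemma pi4 : (0:ℝ) < π/4 := by linarith [Real.pi_pos]

lemma inv_cos_sq {x : ℝ} (h0 : 0 ≤ x) (h1 : x ≤ π/4) :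
    1 / Real.cos x ^ 2 = 1 + Real.tan x ^ 2 := by
  rw [one_div, ← Real.inv_one_add_tan_sq (cos_ne h0 h1), inv_inv]

lemma tan_le_two_mul {x : ℝ} (h0 : 0 ≤ x) (h1 : x ≤ π/4) : Real.tan x ≤ 2 * x := by
  have key : MonotoneOn (fun x => 2 * x - Real.tan x) (Icc 0 (π/4)) := by
    apply mono_aux
    · exact (continuousOn_const.mul continuousOn_id).sub cont_tan
    · intro x hx
      exact ((hasDerivAt_id x).const_mul 2).sub (Real.hasDerivAt_tan (cos_ne hx.1.le hx.2.le))
    · intro x hx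
      have h2 : 1 / Real.cos x ^ 2 = 1 + Real.tan x ^ 2 := inv_cos_sq hx.1.le hx.2.le
      have h3 : Real.tan x ≤ 1 := tan_le_one hx.1.le hx.2.le
      have h4 : 0 ≤ Real.tan x := Real.tan_nonneg_of_nonneg_of_le_pi_div_two hx.1.le (le_of_lt (lt_of_lt_of_le hx.2 (by linarith [Real.pi_pos])))
      have h5 : Real.tan x ^ 2 ≤ 1 := by nlinarith
      simp only [mul_one]
      rw [h2]; nlinarith
  have := key (left_mem_Icc.2 pi4.le) ⟨h0, h1⟩ h0
  simp only [Real.tan_zero, mul_zero, sub_zero] at this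
  linarith

lemma tan_le_quad {x : ℝ} (h0 : 0 ≤ x) (h1 : x ≤ π/4) : Real.tan x ≤ x + x ^ 2 := by
  have key : MonotoneOn (fun x => x + x ^ 2 - Real.tan x) (Icc 0 (π/4)) := by
    apply mono_aux
    · exact (continuousOn_id.add (continuousOn_id.pow 2)).sub cont_tan
    · intro x hx
      exact ((hasDerivAt_id x).add ((hasDerivAt_pow 2 x))).sub
        (Real.hasDerivAt_tan (cos_ne hx.1.le hx.2.le))
    · intro x hx
      have h2 : 1 / Real.cos x ^ 2 = 1 + Real.tan x ^ 2 := inv_cos_sq hx.1.le hx.2.le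
      have h3 : Real.tan x ≤ 1 := tan_le_one hx.1.le hx.2.le
      have h4 : 0 ≤ Real.tan x := Real.tan_nonneg_of_nonneg_of_le_pi_div_two hx.1.le (le_of_lt (lt_of_lt_of_le hx.2 (by linarith [Real.pi_pos])))
      have h5 : Real.tan x ≤ 2 * x := tan_le_two_mul hx.1.le hx.2.le
      have h6 : Real.tan x ^ 2 ≤ 2 * x := by nlinarith
      norm_num
      rw [inv_eq_one_div, h2]
      nlinarith
  have := key (left_mem_Icc.2 pi4.le) ⟨h0, h1⟩ h0
  simp only [Real.tan_zero, zero_pow, add_zero, sub_zero, ne_eq, OfNat.ofNat_ne_zero,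
    not_false_eq_true, zero_add] at this
  linarith

lemma tan_sq_le {x : ℝ} (h0 : 0 ≤ x) (h1 : x ≤ π/4) : Real.tan x ^ 2 ≤ x ^ 2 + 3 * x ^ 3 := by
  have h2 : x ≤ Real.tan x := Real.le_tan h0 (by linarith [Real.pi_pos])
  have h5 : Real.tan x ≤ 2 * x := tan_le_two_mul h0 h1
  have h6 : Real.tan x ≤ x + x ^ 2 := tan_le_quad h0 h1
  nlinarith

lemma tan_le_inv' {x : ℝ} (h0 : 0 ≤ x) (h1 : x < π/2) : Real.tan x ≤ 1 / (π/2 - x) := by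
  rcases eq_or_lt_of_le h0 with h | h
  · rw [← h, Real.tan_zero, sub_zero]
    have := Real.pi_pos; positivity
  · have hy : 0 < π/2 - x := by linarith
    have hy2 : π/2 - x ≤ Real.tan (π/2 - x) := Real.le_tan hy.le (by linarith)
    have ht : Real.tan (π/2 - x) = (Real.tan x)⁻¹ := Real.tan_pi_div_two_sub x
    have htp : 0 < Real.tan x := Real.tan_pos_of_pos_of_lt_pi_div_two h h1
    rw [ht] at hy2
    rw [one_div]
    calc Real.tan x = ((Real.tan x)⁻¹)⁻¹ := by rw [inv_inv]
      _ ≤ (π/2 - x)⁻¹ := inv_anti₀ hy hy2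

-- antiderivative of (1 - t/π)^m
lemma hasDerivAt_upow (m : ℕ) (t : ℝ) :
    HasDerivAt (fun t : ℝ => -(π/(m+1)) * (1 - t/π)^(m+1)) ((1 - t/π)^m) t := by
  have hπ := Real.pi_ne_zero
  have h1 : HasDerivAt (fun t : ℝ => 1 - t/π) (-(1/π)) t := by
    exact ((hasDerivAt_id' t).div_const π).const_sub 1
  have h2 := (h1.pow (m+1)).const_mul (-(π/(m+1)))
  refine h2.congr_deriv ?_
  have : ((m:ℝ)+1) ≠ 0 := by positivity
  rw [Nat.add_sub_cancel]; push_cast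
  field_simp

lemma cont_upow (m : ℕ) : Continuous (fun t : ℝ => (1 - t/π)^m) := by
  fun_prop

lemma base_int (m : ℕ) (a b : ℝ) :
    ∫ t in a..b, (1 - t/π)^m
      = π/(m+1) * ((1-a/π)^(m+1) - (1-b/π)^(m+1)) := by
  rw [intervalIntegral.integral_eq_sub_of_hasDerivAt
    (fun t _ => hasDerivAt_upow m t) ((cont_upow m).intervalIntegrable a b)]
  ring

lemma int_u (m : ℕ) : ∫ t in (0:ℝ)..π, (1 - t/π)^m = π/(m+1) := by
  rw [base_int]
  have hπ := Real.pi_ne_zero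
  rw [div_self hπ]
  simp

lemma int_u_half (m : ℕ) :
    ∫ t in (π/2)..π, (1 - t/π)^m = π/(m+1) * (1/2)^(m+1) := by
  rw [base_int]
  have hπ := Real.pi_ne_zero
  have h2 : 1 - (π/2)/π = 1/2 := by field_simp; ring
  rw [div_self hπ, h2]
  simp

lemma mom1 (m : ℕ) : ∫ t in (0:ℝ)..π, t * (1 - t/π)^m
    = π * (π/(m+1)) - π * (π/(m+2)) := by
  have hπ := Real.pi_ne_zero
  have key : ∀ t : ℝ, t * (1 - t/π)^m
      = π * (1 - t/π)^m - π * (1 - t/π)^(m+1) := by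
    intro t
    rw [pow_succ]
    field_simp
    ring
  rw [intervalIntegral.integral_congr (fun t _ => key t)]
  rw [intervalIntegral.integral_sub
    (((cont_upow m).const_mul _).intervalIntegrable _ _)
    (((cont_upow (m+1)).const_mul _).intervalIntegrable _ _),
    intervalIntegral.integral_const_mul, intervalIntegral.integral_const_mul,
    int_u, int_u]
  push_cast
  ring

lemma mom2 (m : ℕ) : ∫ t in (0:ℝ)..π, t^2 * (1 - t/π)^m
    = π^2 * (π/(m+1)) - 2*π^2 * (π/(m+2)) + π^2 * (π/(m+3)) := by
  have hπ := Real.pi_ne_zero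
  have key : ∀ t : ℝ, t^2 * (1 - t/π)^m
      = π^2 * (1 - t/π)^m - 2*π^2 * (1 - t/π)^(m+1) + π^2 * (1 - t/π)^(m+2) := by
    intro t
    rw [pow_succ, pow_succ, pow_succ]
    simp only [one_sub_div hπ, div_pow]
    field_simp
    ring
  rw [intervalIntegral.integral_congr (fun t _ => key t)]
  rw [intervalIntegral.integral_add (IntervalIntegrable.sub
      (((cont_upow m).const_mul _).intervalIntegrable _ _)
      (((cont_upow (m+1)).const_mul _).intervalIntegrable _ _))
      (((cont_upow (m+2)).const_mul _).intervalIntegrable _ _),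
    intervalIntegral.integral_sub
      (((cont_upow m).const_mul _).intervalIntegrable _ _)
      (((cont_upow (m+1)).const_mul _).intervalIntegrable _ _),
    intervalIntegral.integral_const_mul, intervalIntegral.integral_const_mul,
    intervalIntegral.integral_const_mul, int_u, int_u, int_u]
  push_cast
  ring

lemma mom3 (m : ℕ) : ∫ t in (0:ℝ)..π, t^3 * (1 - t/π)^m
    = π^3 * (π/(m+1)) - 3*π^3 * (π/(m+2)) + 3*π^3 * (π/(m+3)) - π^3 * (π/(m+4)) := by
  have hπ := Real.pi_ne_zero
  have key : ∀ t : ℝ, t^3 * (1 - t/π)^m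
      = π^3 * (1 - t/π)^m - 3*π^3 * (1 - t/π)^(m+1) + 3*π^3 * (1 - t/π)^(m+2)
        - π^3 * (1 - t/π)^(m+3) := by
    intro t
    rw [pow_succ, pow_succ, pow_succ, pow_succ, pow_succ, pow_succ]
    simp only [one_sub_div hπ, div_pow]
    field_simp
    ring
  rw [intervalIntegral.integral_congr (fun t _ => key t)]
  rw [intervalIntegral.integral_sub (IntervalIntegrable.add (IntervalIntegrable.sub
      (((cont_upow m).const_mul _).intervalIntegrable _ _)
      (((cont_upow (m+1)).const_mul _).intervalIntegrable _ _))
      (((cont_upow (m+2)).const_mul _).intervalIntegrable _ _))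
      (((cont_upow (m+3)).const_mul _).intervalIntegrable _ _),
    intervalIntegral.integral_add (IntervalIntegrable.sub
      (((cont_upow m).const_mul _).intervalIntegrable _ _)
      (((cont_upow (m+1)).const_mul _).intervalIntegrable _ _))
      (((cont_upow (m+2)).const_mul _).intervalIntegrable _ _),
    intervalIntegral.integral_sub
      (((cont_upow m).const_mul _).intervalIntegrable _ _)
      (((cont_upow (m+1)).const_mul _).intervalIntegrable _ _),
    intervalIntegral.integral_const_mul, intervalIntegral.integral_const_mul,
    intervalIntegral.integral_const_mul, intervalIntegral.integral_const_mul,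
    int_u, int_u, int_u, int_u]
  push_cast
  ring

lemma meas_tan_half : Measurable (fun t : ℝ => Real.tan (t/2)) := by
  have h : (fun t : ℝ => Real.tan (t/2))
      = fun t : ℝ => Real.sin (t/2) / Real.cos (t/2) := by
    funext t; rw [Real.tan_eq_sin_div_cos]
  rw [h]
  exact (Real.continuous_sin.measurable.comp (measurable_id.div_const 2)).div
    (Real.continuous_cos.measurable.comp (measurable_id.div_const 2))

lemma ae_off_pi {s : Set ℝ} (hm : MeasurableSet s) {P : ℝ → Prop}
    (h : ∀ t ∈ s, t ≠ π → P t) : ∀ᵐ t ∂(volume.restrict s), P t := by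
  have hne : ∀ᵐ t ∂(volume : Measure ℝ), t ≠ π := by
    have h1 : {x : ℝ | ¬ x ≠ π} = {π} := by ext x; simp
    rw [ae_iff, h1]
    exact measure_singleton π
  filter_upwards [ae_restrict_mem hm, ae_restrict_of_ae hne] with t ht htne
  exact h t ht htne

lemma tan_half_nonneg {t : ℝ} (h0 : 0 ≤ t) (h1 : t ≤ π) : 0 ≤ Real.tan (t/2) :=
  Real.tan_nonneg_of_nonneg_of_le_pi_div_two (by linarith) (by linarith)

lemma tan_half_le {t : ℝ} (h0 : 0 ≤ t) (h1 : t < π) : Real.tan (t/2) ≤ 2/(π - t) := by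
  have h2 := tan_le_inv' (x := t/2) (by linarith) (by linarith)
  have h3 : (1:ℝ)/(π/2 - t/2) = 2/(π - t) := by
    rw [div_eq_div_iff (by linarith) (by linarith)]; ring
  linarith [h3 ▸ h2]

-- key product bound: tan(t/2) * (1-t/π) ≤ 2/π for t ∈ [0,π)
lemma tan_mul_u_le {t : ℝ} (h0 : 0 ≤ t) (h1 : t < π) :
    Real.tan (t/2) * (1 - t/π) ≤ 2/π := by
  have hπ := Real.pi_pos
  have hu : 1 - t/π = (π - t)/π := by field_simp
  have h2 := tan_half_le h0 h1
  have h3 : 0 ≤ Real.tan (t/2) := tan_half_nonneg h0 h1.le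
  rw [hu]
  calc Real.tan (t/2) * ((π - t)/π) ≤ (2/(π-t)) * ((π-t)/π) := by
        apply mul_le_mul_of_nonneg_right h2
        apply div_nonneg (by linarith) hπ.le
    _ = 2/π := by
        rw [div_mul_div_comm, mul_comm 2 (π - t),
          mul_div_mul_left _ _ (by linarith : π - t ≠ 0)]
  
lemma u_nonneg {t : ℝ} (h1 : t ≤ π) : 0 ≤ 1 - t/π := by
  have hπ := Real.pi_pos
  rw [sub_nonneg, div_le_one hπ]; exact h1

lemma intg₁ (n : ℕ) (c : ℝ) :
    IntervalIntegrable (fun t => Real.tan (t/2) * c * (1 - t/π)^(n+1)) volume 0 π := by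
  apply IntervalIntegrable.mono_fun'
    (g := fun t => |c| * (2/π) * (1 - t/π)^n)
    ((continuous_const.mul (cont_upow n)).intervalIntegrable _ _)
  · exact ((meas_tan_half.mul_const c).mul
      ((cont_upow (n+1)).measurable)).aestronglyMeasurable
  · rw [uIoc_of_le Real.pi_pos.le]
    apply ae_off_pi measurableSet_Ioc
    intro t ht htne
    have h0 : 0 ≤ t := ht.1.le
    have h1 : t < π := lt_of_le_of_ne ht.2 htne
    have hπ := Real.pi_pos
    have hu := u_nonneg h1.le
    have htn := tan_half_nonneg h0 h1.le
    have hkey := tan_mul_u_le h0 h1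
    have hun : 0 ≤ (1 - t/π)^n := pow_nonneg hu n
    simp only [Real.norm_eq_abs, abs_mul, abs_pow, abs_of_nonneg htn, abs_of_nonneg hu]
    calc Real.tan (t/2) * |c| * (1 - t/π)^(n+1)
        = (Real.tan (t/2) * (1 - t/π)) * (1 - t/π)^n * |c| := by ring
      _ ≤ (2/π) * (1 - t/π)^n * |c| := by
          apply mul_le_mul_of_nonneg_right _ (abs_nonneg c)
          exact mul_le_mul_of_nonneg_right hkey hun
      _ = |c| * (2/π) * (1 - t/π)^n := by ring

lemma intg₂ (n : ℕ) (c : ℝ) :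
    IntervalIntegrable (fun t => Real.tan (t/2)^2 * c * (1 - t/π)^(n+2)) volume 0 π := by
  apply IntervalIntegrable.mono_fun'
    (g := fun t => |c| * (4/π^2) * (1 - t/π)^n)
    ((continuous_const.mul (cont_upow n)).intervalIntegrable _ _)
  · exact (((meas_tan_half.pow_const 2).mul_const c).mul
      ((cont_upow (n+2)).measurable)).aestronglyMeasurable
  · rw [uIoc_of_le Real.pi_pos.le]
    apply ae_off_pi measurableSet_Ioc
    intro t ht htne
    have h0 : 0 ≤ t := ht.1.le
    have h1 : t < π := lt_of_le_of_ne ht.2 htne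
    have hπ := Real.pi_pos
    have hu := u_nonneg h1.le
    have htn := tan_half_nonneg h0 h1.le
    have hkey := tan_mul_u_le h0 h1
    have hun : 0 ≤ (1 - t/π)^n := pow_nonneg hu n
    simp only [Real.norm_eq_abs, abs_mul, abs_pow, abs_of_nonneg htn, abs_of_nonneg hu]
    calc Real.tan (t/2)^2 * |c| * (1 - t/π)^(n+2)
        = (Real.tan (t/2) * (1 - t/π))^2 * (1 - t/π)^n * |c| := by ring
      _ ≤ (2/π)^2 * (1 - t/π)^n * |c| := by
          apply mul_le_mul_of_nonneg_right _ (abs_nonneg c)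
          apply mul_le_mul_of_nonneg_right _ hun
          apply pow_le_pow_left₀ (by positivity) hkey
      _ = |c| * (4/π^2) * (1 - t/π)^n := by ring

lemma I1_unfold (n : ℕ) : I₁ (n+3)
    = ∫ t in (0:ℝ)..π, Real.tan (t/2) * (((n:ℝ)+3)/π) * (1-t/π)^(n+2) := by
  have he : n + 3 - 1 = n + 2 := by omega
  simp only [I₁, he]
  norm_num

lemma I1_lb (n : ℕ) :
    (((n:ℝ)+3)/π)/2 * (π*(π/((n:ℝ)+3)) - π*(π/((n:ℝ)+4))) ≤ I₁ (n+3) := by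
  have hπ := Real.pi_pos
  set c : ℝ := ((n:ℝ)+3)/π with hc
  have hcnn : 0 ≤ c := by positivity
  rw [I1_unfold]
  have hmono : (∫ t in (0:ℝ)..π, (t/2) * c * (1-t/π)^(n+2))
      ≤ ∫ t in (0:ℝ)..π, Real.tan (t/2) * c * (1-t/π)^(n+2) := by
    apply intervalIntegral.integral_mono_ae_restrict hπ.le
      (Continuous.intervalIntegrable (by fun_prop) _ _) (intg₁ (n+1) c)
    apply ae_off_pi measurableSet_Icc
    intro t ht htne
    have h1 : t < π := lt_of_le_of_ne ht.2 htne
    have h2 : t/2 ≤ Real.tan (t/2) := Real.le_tan (by linarith [ht.1]) (by linarith)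
    have h3 : 0 ≤ c * (1-t/π)^(n+2) := mul_nonneg hcnn (pow_nonneg (u_nonneg h1.le) _)
    simp only [mul_assoc]
    exact mul_le_mul_of_nonneg_right h2 h3
  refine le_trans ?_ hmono
  have key : ∀ t : ℝ, (t/2) * c * (1-t/π)^(n+2) = (c/2) * (t * (1-t/π)^(n+2)) :=
    fun t => by ring
  rw [intervalIntegral.integral_congr (fun t _ => key t),
    intervalIntegral.integral_const_mul, mom1]
  apply le_of_eq
  push_cast
  ring

lemma I1_ub (n : ℕ) :
    I₁ (n+3) ≤ (((n:ℝ)+3)/π)/2 * (π*(π/((n:ℝ)+3)) - π*(π/((n:ℝ)+4)))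
      + (((n:ℝ)+3)/π)/4 * (π^2*(π/((n:ℝ)+3)) - 2*π^2*(π/((n:ℝ)+4)) + π^2*(π/((n:ℝ)+5)))
      + (((n:ℝ)+3)/π) * (2/π) * (π/((n:ℝ)+2) * (1/2)^(n+2)) := by
  have hπ := Real.pi_pos
  set c : ℝ := ((n:ℝ)+3)/π with hc
  have hcnn : 0 ≤ c := by positivity
  rw [I1_unfold]
  set f : ℝ → ℝ := fun t => Real.tan (t/2) * c * (1-t/π)^(n+2) with hf
  have hint : IntervalIntegrable f volume 0 π := intg₁ (n+1) c
  have hsub1 : IntervalIntegrable f volume 0 (π/2) := by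
    apply hint.mono_set
    rw [uIcc_of_le (by linarith), uIcc_of_le hπ.le]
    exact Icc_subset_Icc le_rfl (by linarith)
  have hsub2 : IntervalIntegrable f volume (π/2) π := by
    apply hint.mono_set
    rw [uIcc_of_le (by linarith), uIcc_of_le hπ.le]
    exact Icc_subset_Icc (by linarith) le_rfl
  rw [← intervalIntegral.integral_add_adjacent_intervals hsub1 hsub2]
  have hp1 : (∫ t in (0:ℝ)..(π/2), f t)
      ≤ (c/2) * (π*(π/((n:ℝ)+3)) - π*(π/((n:ℝ)+4)))
        + (c/4) * (π^2*(π/((n:ℝ)+3)) - 2*π^2*(π/((n:ℝ)+4)) + π^2*(π/((n:ℝ)+5))) := by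
    have step1 : (∫ t in (0:ℝ)..(π/2), f t)
        ≤ ∫ t in (0:ℝ)..(π/2), (t/2 + t^2/4) * c * (1-t/π)^(n+2) := by
      apply intervalIntegral.integral_mono_on (by linarith) hsub1
        (Continuous.intervalIntegrable (by fun_prop) _ _)
      intro t ht
      have h0 : 0 ≤ t := ht.1
      have h1 : t ≤ π/2 := ht.2
      have h2 : Real.tan (t/2) ≤ t/2 + (t/2)^2 := tan_le_quad (by linarith) (by linarith)
      have h3 : 0 ≤ c * (1-t/π)^(n+2) :=
        mul_nonneg hcnn (pow_nonneg (u_nonneg (by linarith)) _)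
      simp only [hf, mul_assoc]
      refine mul_le_mul_of_nonneg_right (le_trans h2 (le_of_eq (by ring))) h3
    have step2 : (∫ t in (0:ℝ)..(π/2), (t/2 + t^2/4) * c * (1-t/π)^(n+2))
        ≤ ∫ t in (0:ℝ)..π, (t/2 + t^2/4) * c * (1-t/π)^(n+2) := by
      apply intervalIntegral.integral_mono_interval le_rfl (by linarith) (by linarith)
      · apply ae_off_pi measurableSet_Ioc
        intro t ht htne
        have h1 : t < π := lt_of_le_of_ne ht.2 htne
        have := u_nonneg h1.le
        have h0 : (0:ℝ) < t := ht.1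
        positivity
      · exact Continuous.intervalIntegrable (by fun_prop) _ _
    refine le_trans (le_trans step1 step2) ?_
    have key : ∀ t : ℝ, (t/2 + t^2/4) * c * (1-t/π)^(n+2)
        = (c/2) * (t * (1-t/π)^(n+2)) + (c/4) * (t^2 * (1-t/π)^(n+2)) := fun t => by ring
    rw [intervalIntegral.integral_congr (fun t _ => key t),
      intervalIntegral.integral_add
        ((Continuous.intervalIntegrable (by fun_prop) _ _))
        ((Continuous.intervalIntegrable (by fun_prop) _ _)),
      intervalIntegral.integral_const_mul, intervalIntegral.integral_const_mul,
      mom1, mom2]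
    apply le_of_eq
    push_cast
    ring
  have hp2 : (∫ t in (π/2)..π, f t) ≤ c * (2/π) * (π/((n:ℝ)+2) * (1/2)^(n+2)) := by
    have step1 : (∫ t in (π/2)..π, f t)
        ≤ ∫ t in (π/2)..π, (2/π) * c * (1-t/π)^(n+1) := by
      apply intervalIntegral.integral_mono_ae_restrict (by linarith) hsub2
        (Continuous.intervalIntegrable (by fun_prop) _ _)
      apply ae_off_pi measurableSet_Icc
      intro t ht htne
      have h0 : (0:ℝ) ≤ t := le_trans (by linarith) ht.1
      have h1 : t < π := lt_of_le_of_ne ht.2 htne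
      have hu := u_nonneg h1.le
      have hkey := tan_mul_u_le h0 h1
      have hun : 0 ≤ (1-t/π)^(n+1) := pow_nonneg hu _
      simp only [hf]
      calc Real.tan (t/2) * c * (1-t/π)^(n+2)
          = (Real.tan (t/2) * (1-t/π)) * ((1-t/π)^(n+1)) * c := by ring
        _ ≤ (2/π) * ((1-t/π)^(n+1)) * c := by
            apply mul_le_mul_of_nonneg_right _ hcnn
            exact mul_le_mul_of_nonneg_right hkey hun
        _ = (2/π) * c * (1-t/π)^(n+1) := by ring
    refine le_trans step1 ?_
    rw [intervalIntegral.integral_const_mul, int_u_half]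
    apply le_of_eq
    push_cast
    ring
  exact le_trans (add_le_add hp1 hp2) (le_of_eq (by push_cast; ring))

lemma I2_unfold (n : ℕ) : I₂ (n+3)
    = ∫ t in (0:ℝ)..π, Real.tan (t/2)^2 * (((n:ℝ)+3)/π) * (1-t/π)^(n+2) := by
  have he : n + 3 - 1 = n + 2 := by omega
  simp only [I₂, he]
  norm_num

lemma I2_lb (n : ℕ) :
    (((n:ℝ)+3)/π)/4 * (π^2*(π/((n:ℝ)+3)) - 2*π^2*(π/((n:ℝ)+4)) + π^2*(π/((n:ℝ)+5)))
      ≤ I₂ (n+3) := by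
  have hπ := Real.pi_pos
  set c : ℝ := ((n:ℝ)+3)/π with hc
  have hcnn : 0 ≤ c := by positivity
  rw [I2_unfold]
  have hmono : (∫ t in (0:ℝ)..π, (t^2/4) * c * (1-t/π)^(n+2))
      ≤ ∫ t in (0:ℝ)..π, Real.tan (t/2)^2 * c * (1-t/π)^(n+2) := by
    apply intervalIntegral.integral_mono_ae_restrict hπ.le
      (Continuous.intervalIntegrable (by fun_prop) _ _) (intg₂ n c)
    apply ae_off_pi measurableSet_Icc
    intro t ht htne
    have h1 : t < π := lt_of_le_of_ne ht.2 htne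
    have h0 : 0 ≤ t := ht.1
    have h2 : t/2 ≤ Real.tan (t/2) := Real.le_tan (by linarith) (by linarith)
    have h2' : (t/2)^2 ≤ Real.tan (t/2)^2 := by
      apply pow_le_pow_left₀ (by linarith) h2
    have h3 : 0 ≤ c * (1-t/π)^(n+2) := mul_nonneg hcnn (pow_nonneg (u_nonneg h1.le) _)
    simp only [mul_assoc]
    refine mul_le_mul_of_nonneg_right (le_trans (le_of_eq (by ring)) h2') h3
  refine le_trans ?_ hmono
  have key : ∀ t : ℝ, (t^2/4) * c * (1-t/π)^(n+2) = (c/4) * (t^2 * (1-t/π)^(n+2)) :=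
    fun t => by ring
  rw [intervalIntegral.integral_congr (fun t _ => key t),
    intervalIntegral.integral_const_mul, mom2]
  apply le_of_eq
  push_cast
  ring

lemma I2_ub (n : ℕ) :
    I₂ (n+3) ≤ (((n:ℝ)+3)/π)/4 * (π^2*(π/((n:ℝ)+3)) - 2*π^2*(π/((n:ℝ)+4)) + π^2*(π/((n:ℝ)+5)))
      + (((n:ℝ)+3)/π) * (3/8)
        * (π^3*(π/((n:ℝ)+3)) - 3*π^3*(π/((n:ℝ)+4)) + 3*π^3*(π/((n:ℝ)+5)) - π^3*(π/((n:ℝ)+6)))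
      + (((n:ℝ)+3)/π) * (4/π^2) * (π/((n:ℝ)+1) * (1/2)^(n+1)) := by
  have hπ := Real.pi_pos
  set c : ℝ := ((n:ℝ)+3)/π with hc
  have hcnn : 0 ≤ c := by positivity
  rw [I2_unfold]
  set f : ℝ → ℝ := fun t => Real.tan (t/2)^2 * c * (1-t/π)^(n+2) with hf
  have hint : IntervalIntegrable f volume 0 π := intg₂ n c
  have hsub1 : IntervalIntegrable f volume 0 (π/2) := by
    apply hint.mono_set
    rw [uIcc_of_le (by linarith), uIcc_of_le hπ.le]
    exact Icc_subset_Icc le_rfl (by linarith)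
  have hsub2 : IntervalIntegrable f volume (π/2) π := by
    apply hint.mono_set
    rw [uIcc_of_le (by linarith), uIcc_of_le hπ.le]
    exact Icc_subset_Icc (by linarith) le_rfl
  rw [← intervalIntegral.integral_add_adjacent_intervals hsub1 hsub2]
  have hp1 : (∫ t in (0:ℝ)..(π/2), f t)
      ≤ (c/4) * (π^2*(π/((n:ℝ)+3)) - 2*π^2*(π/((n:ℝ)+4)) + π^2*(π/((n:ℝ)+5)))
        + (c*(3/8))
          * (π^3*(π/((n:ℝ)+3)) - 3*π^3*(π/((n:ℝ)+4)) + 3*π^3*(π/((n:ℝ)+5)) - π^3*(π/((n:ℝ)+6))) := by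
    have step1 : (∫ t in (0:ℝ)..(π/2), f t)
        ≤ ∫ t in (0:ℝ)..(π/2), (t^2/4 + 3*t^3/8) * c * (1-t/π)^(n+2) := by
      apply intervalIntegral.integral_mono_on (by linarith) hsub1
        (Continuous.intervalIntegrable (by fun_prop) _ _)
      intro t ht
      have h0 : 0 ≤ t := ht.1
      have h1 : t ≤ π/2 := ht.2
      have h2 : Real.tan (t/2)^2 ≤ (t/2)^2 + 3*(t/2)^3 := tan_sq_le (by linarith) (by linarith)
      have h3 : 0 ≤ c * (1-t/π)^(n+2) :=
        mul_nonneg hcnn (pow_nonneg (u_nonneg (by linarith)) _)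
      simp only [hf, mul_assoc]
      refine mul_le_mul_of_nonneg_right (le_trans h2 (le_of_eq (by ring))) h3
    have step2 : (∫ t in (0:ℝ)..(π/2), (t^2/4 + 3*t^3/8) * c * (1-t/π)^(n+2))
        ≤ ∫ t in (0:ℝ)..π, (t^2/4 + 3*t^3/8) * c * (1-t/π)^(n+2) := by
      apply intervalIntegral.integral_mono_interval le_rfl (by linarith) (by linarith)
      · apply ae_off_pi measurableSet_Ioc
        intro t ht htne
        have h1 : t < π := lt_of_le_of_ne ht.2 htne
        have := u_nonneg h1.le
        have h0 : (0:ℝ) < t := ht.1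
        positivity
      · exact Continuous.intervalIntegrable (by fun_prop) _ _
    refine le_trans (le_trans step1 step2) ?_
    have key : ∀ t : ℝ, (t^2/4 + 3*t^3/8) * c * (1-t/π)^(n+2)
        = (c/4) * (t^2 * (1-t/π)^(n+2)) + (c*(3/8)) * (t^3 * (1-t/π)^(n+2)) := fun t => by ring
    rw [intervalIntegral.integral_congr (fun t _ => key t),
      intervalIntegral.integral_add
        ((Continuous.intervalIntegrable (by fun_prop) _ _))
        ((Continuous.intervalIntegrable (by fun_prop) _ _)),
      intervalIntegral.integral_const_mul, intervalIntegral.integral_const_mul,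
      mom2, mom3]
    apply le_of_eq
    push_cast
    ring
  have hp2 : (∫ t in (π/2)..π, f t) ≤ c * (4/π^2) * (π/((n:ℝ)+1) * (1/2)^(n+1)) := by
    have step1 : (∫ t in (π/2)..π, f t)
        ≤ ∫ t in (π/2)..π, (4/π^2) * c * (1-t/π)^n := by
      apply intervalIntegral.integral_mono_ae_restrict (by linarith) hsub2
        (Continuous.intervalIntegrable (by fun_prop) _ _)
      apply ae_off_pi measurableSet_Icc
      intro t ht htne
      have h0 : (0:ℝ) ≤ t := le_trans (by linarith) ht.1
      have h1 : t < π := lt_of_le_of_ne ht.2 htne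
      have hu := u_nonneg h1.le
      have hkey := tan_mul_u_le h0 h1
      have htn := tan_half_nonneg h0 h1.le
      have hun : 0 ≤ (1-t/π)^n := pow_nonneg hu _
      simp only [hf]
      calc Real.tan (t/2)^2 * c * (1-t/π)^(n+2)
          = (Real.tan (t/2) * (1-t/π))^2 * ((1-t/π)^n) * c := by ring
        _ ≤ (2/π)^2 * ((1-t/π)^n) * c := by
            apply mul_le_mul_of_nonneg_right _ hcnn
            exact mul_le_mul_of_nonneg_right (pow_le_pow_left₀ (by positivity) hkey 2) hun
        _ = (4/π^2) * c * (1-t/π)^n := by ring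
    refine le_trans step1 ?_
    rw [intervalIntegral.integral_const_mul, int_u_half]
    apply le_of_eq
    push_cast
    ring
  exact le_trans (add_le_add hp1 hp2) (le_of_eq (by push_cast; ring))

lemma tendsto_inv_shift (a : ℝ) :
    Tendsto (fun n : ℕ => 1/((n:ℝ)+a)) atTop (nhds 0) := by
  have h := tendsto_atTop_add_const_right atTop a tendsto_natCast_atTop_atTop
  simpa [one_div, Pi.inv_def] using h.inv_tendsto_atTop

lemma tendsto_ratio (a b : ℝ) (hb : 0 < b) :
    Tendsto (fun n : ℕ => ((n:ℝ)+a)/((n:ℝ)+b)) atTop (nhds 1) := by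
  have key : ∀ n : ℕ, ((n:ℝ)+a)/((n:ℝ)+b) = 1 + (a-b)*(1/((n:ℝ)+b)) := by
    intro n
    have hnb : ((n:ℝ)+b) ≠ 0 := by positivity
    field_simp
    ring
  have h : Tendsto (fun n : ℕ => 1 + (a-b)*(1/((n:ℝ)+b))) atTop (nhds (1 + (a-b)*0)) :=
    tendsto_const_nhds.add ((tendsto_inv_shift b).const_mul _)
  simp only [mul_zero, add_zero] at h
  exact h.congr (fun n => (key n).symm)

lemma tendsto_geo (k : ℕ) :
    Tendsto (fun n : ℕ => (((n:ℝ)+3))^k * (1/2:ℝ)^(n+3)) atTop (nhds 0) := by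
  have h := tendsto_pow_const_mul_const_pow_of_lt_one k
    (by norm_num : (0:ℝ) ≤ 1/2) (by norm_num : (1/2:ℝ) < 1)
  have h2 := h.comp (tendsto_add_atTop_nat 3)
  apply h2.congr
  intro n
  simp only [Function.comp_apply]
  push_cast
  ring

lemma tendstoA : Tendsto (fun N : ℕ => (N:ℝ) * I₁ N) atTop (nhds (π/2)) := by
  have hπ := Real.pi_pos
  rw [← tendsto_add_atTop_iff_nat 3]
  have hcast : ∀ n : ℕ, (((n+3 : ℕ)):ℝ) = (n:ℝ)+3 := fun n => by push_cast; ring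
  -- lower bound function
  set lo : ℕ → ℝ := fun n =>
    ((n:ℝ)+3) * ((((n:ℝ)+3)/π)/2 * (π*(π/((n:ℝ)+3)) - π*(π/((n:ℝ)+4)))) with hlo_def
  set t2 : ℕ → ℝ := fun n =>
    ((n:ℝ)+3) * ((((n:ℝ)+3)/π)/4
      * (π^2*(π/((n:ℝ)+3)) - 2*π^2*(π/((n:ℝ)+4)) + π^2*(π/((n:ℝ)+5)))) with ht2_def
  set t3 : ℕ → ℝ := fun n =>
    ((n:ℝ)+3) * ((((n:ℝ)+3)/π) * (2/π) * (π/((n:ℝ)+2) * (1/2:ℝ)^(n+2))) with ht3_def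
  have hlo : Tendsto lo atTop (nhds (π/2)) := by
    have key : ∀ n : ℕ, lo n = π/2 * (((n:ℝ)+3)/((n:ℝ)+4)) := by
      intro n
      have h3 : ((n:ℝ)+3) ≠ 0 := by positivity
      have h4 : ((n:ℝ)+4) ≠ 0 := by positivity
      simp only [hlo_def]
      field_simp
      ring
    have h := ((tendsto_ratio 3 4 (by norm_num)).const_mul (π/2))
    simp only [mul_one] at h
    exact h.congr (fun n => (key n).symm)
  have ht2 : Tendsto t2 atTop (nhds 0) := by
    have key : ∀ n : ℕ, t2 n = π^2/2 * (((n:ℝ)+3)/((n:ℝ)+4)) * (1/((n:ℝ)+5)) := by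
      intro n
      have h3 : ((n:ℝ)+3) ≠ 0 := by positivity
      have h4 : ((n:ℝ)+4) ≠ 0 := by positivity
      have h5 : ((n:ℝ)+5) ≠ 0 := by positivity
      simp only [ht2_def]
      field_simp
      ring
    have h := ((tendsto_ratio 3 4 (by norm_num)).const_mul (π^2/2)).mul (tendsto_inv_shift 5)
    simp only [mul_one, mul_zero] at h
    exact h.congr (fun n => (key n).symm)
  have ht3 : Tendsto t3 atTop (nhds 0) := by
    have hbound : Tendsto (fun n : ℕ => (4/π) * (((n:ℝ)+3))^2 * (1/2:ℝ)^(n+3)) atTop (nhds 0) := by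
      have h := (tendsto_geo 2).const_mul (4/π)
      simp only [mul_zero] at h
      exact h.congr (fun n => by ring)
    apply squeeze_zero (g := fun n : ℕ => (4/π) * (((n:ℝ)+3))^2 * (1/2:ℝ)^(n+3)) _ _ hbound
    · intro n
      have h2 : (0:ℝ) < (n:ℝ)+2 := by positivity
      simp only [ht3_def]
      positivity
    · intro n
      have h2 : (1:ℝ) ≤ (n:ℝ)+2 := by
        have : (0:ℝ) ≤ (n:ℝ) := Nat.cast_nonneg n
        linarith
      have h2' : (0:ℝ) < (n:ℝ)+2 := by linarith
      have key : t3 n = (2/π) * ((n:ℝ)+3)^2 / ((n:ℝ)+2) * (1/2:ℝ)^(n+2) := by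
        simp only [ht3_def]
        field_simp
      have key2 : (4/π) * (((n:ℝ)+3))^2 * (1/2:ℝ)^(n+3)
          = (2/π) * ((n:ℝ)+3)^2 * (1/2:ℝ)^(n+2) := by
        rw [pow_succ]
        ring
      show t3 n ≤ (4/π) * (((n:ℝ)+3))^2 * (1/2:ℝ)^(n+3)
      rw [key, key2]
      rw [div_mul_eq_mul_div, div_le_iff₀ h2']
      have hnn : (0:ℝ) ≤ (2/π) * ((n:ℝ)+3)^2 * (1/2:ℝ)^(n+2) := by positivity
      nlinarith
  have hhi : Tendsto (fun n => lo n + t2 n + t3 n) atTop (nhds (π/2)) := by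
    have h := (hlo.add ht2).add ht3
    simpa using h
  apply tendsto_of_tendsto_of_tendsto_of_le_of_le hlo hhi
  · intro n
    have h1 := I1_lb n
    have hnn : (0:ℝ) ≤ ((n+3:ℕ):ℝ) := Nat.cast_nonneg _
    calc lo n = ((n:ℝ)+3) * ((((n:ℝ)+3)/π)/2 * (π*(π/((n:ℝ)+3)) - π*(π/((n:ℝ)+4)))) := rfl
      _ ≤ ((n:ℝ)+3) * I₁ (n+3) := by
          apply mul_le_mul_of_nonneg_left h1 (by positivity)
      _ = ((n+3:ℕ):ℝ) * I₁ (n+3) := by rw [hcast]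
  · intro n
    have h1 := I1_ub n
    calc ((n+3:ℕ):ℝ) * I₁ (n+3) = ((n:ℝ)+3) * I₁ (n+3) := by rw [hcast]
      _ ≤ lo n + t2 n + t3 n := by
          have := mul_le_mul_of_nonneg_left h1 (by positivity : (0:ℝ) ≤ (n:ℝ)+3)
          simp only [hlo_def, ht2_def, ht3_def]
          linarith [this]

lemma tendstoB : Tendsto (fun N : ℕ => (N:ℝ)^2 * I₂ N) atTop (nhds (π^2/2)) := by
  have hπ := Real.pi_pos
  rw [← tendsto_add_atTop_iff_nat 3]
  have hcast : ∀ n : ℕ, (((n+3 : ℕ)):ℝ) = (n:ℝ)+3 := fun n => by push_cast; ring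
  set lo : ℕ → ℝ := fun n =>
    ((n:ℝ)+3)^2 * ((((n:ℝ)+3)/π)/4
      * (π^2*(π/((n:ℝ)+3)) - 2*π^2*(π/((n:ℝ)+4)) + π^2*(π/((n:ℝ)+5)))) with hlo_def
  set t2 : ℕ → ℝ := fun n =>
    ((n:ℝ)+3)^2 * ((((n:ℝ)+3)/π) * (3/8)
      * (π^3*(π/((n:ℝ)+3)) - 3*π^3*(π/((n:ℝ)+4)) + 3*π^3*(π/((n:ℝ)+5))
        - π^3*(π/((n:ℝ)+6)))) with ht2_def
  set t3 : ℕ → ℝ := fun n =>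
    ((n:ℝ)+3)^2 * ((((n:ℝ)+3)/π) * (4/π^2) * (π/((n:ℝ)+1) * (1/2:ℝ)^(n+1))) with ht3_def
  have hlo : Tendsto lo atTop (nhds (π^2/2)) := by
    have key : ∀ n : ℕ, lo n
        = π^2/2 * (((n:ℝ)+3)/((n:ℝ)+4)) * (((n:ℝ)+3)/((n:ℝ)+5)) := by
      intro n
      have h3 : ((n:ℝ)+3) ≠ 0 := by positivity
      have h4 : ((n:ℝ)+4) ≠ 0 := by positivity
      have h5 : ((n:ℝ)+5) ≠ 0 := by positivity
      simp only [hlo_def]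
      field_simp
      ring
    have h := ((tendsto_ratio 3 4 (by norm_num)).const_mul (π^2/2)).mul
      (tendsto_ratio 3 5 (by norm_num))
    simp only [mul_one] at h
    exact h.congr (fun n => (key n).symm)
  have ht2 : Tendsto t2 atTop (nhds 0) := by
    have key : ∀ n : ℕ, t2 n = 9*π^3/4 * (((n:ℝ)+3)/((n:ℝ)+4)) * (((n:ℝ)+3)/((n:ℝ)+5))
        * (1/((n:ℝ)+6)) := by
      intro n
      have h3 : ((n:ℝ)+3) ≠ 0 := by positivity
      have h4 : ((n:ℝ)+4) ≠ 0 := by positivity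
      have h5 : ((n:ℝ)+5) ≠ 0 := by positivity
      have h6 : ((n:ℝ)+6) ≠ 0 := by positivity
      simp only [ht2_def]
      field_simp
      ring
    have h := (((tendsto_ratio 3 4 (by norm_num)).const_mul (9*π^3/4)).mul
      (tendsto_ratio 3 5 (by norm_num))).mul (tendsto_inv_shift 6)
    simp only [mul_one, mul_zero] at h
    exact h.congr (fun n => (key n).symm)
  have ht3 : Tendsto t3 atTop (nhds 0) := by
    have hbound : Tendsto (fun n : ℕ => (16/π^2) * (((n:ℝ)+3))^3 * (1/2:ℝ)^(n+3))
        atTop (nhds 0) := by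
      have h := (tendsto_geo 3).const_mul (16/π^2)
      simp only [mul_zero] at h
      exact h.congr (fun n => by ring)
    apply squeeze_zero (g := fun n : ℕ => (16/π^2) * (((n:ℝ)+3))^3 * (1/2:ℝ)^(n+3)) _ _ hbound
    · intro n
      have h1 : (0:ℝ) < (n:ℝ)+1 := by positivity
      simp only [ht3_def]
      positivity
    · intro n
      have h2 : (1:ℝ) ≤ (n:ℝ)+1 := by
        have : (0:ℝ) ≤ (n:ℝ) := Nat.cast_nonneg n
        linarith
      have h2' : (0:ℝ) < (n:ℝ)+1 := by linarith
      have key : t3 n = (4/π^2) * ((n:ℝ)+3)^3 / ((n:ℝ)+1) * (1/2:ℝ)^(n+1) := by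
        simp only [ht3_def]
        field_simp
      have key2 : (16/π^2) * (((n:ℝ)+3))^3 * (1/2:ℝ)^(n+3)
          = (4/π^2) * ((n:ℝ)+3)^3 * (1/2:ℝ)^(n+1) := by
        rw [pow_succ, pow_succ]
        ring
      show t3 n ≤ (16/π^2) * (((n:ℝ)+3))^3 * (1/2:ℝ)^(n+3)
      rw [key, key2]
      rw [div_mul_eq_mul_div, div_le_iff₀ h2']
      have hnn : (0:ℝ) ≤ (4/π^2) * ((n:ℝ)+3)^3 * (1/2:ℝ)^(n+1) := by positivity
      nlinarith
  have hhi : Tendsto (fun n => lo n + t2 n + t3 n) atTop (nhds (π^2/2)) := by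
    have h := (hlo.add ht2).add ht3
    simpa using h
  apply tendsto_of_tendsto_of_tendsto_of_le_of_le hlo hhi
  · intro n
    have h1 := I2_lb n
    calc lo n ≤ ((n:ℝ)+3)^2 * I₂ (n+3) := by
          apply mul_le_mul_of_nonneg_left h1 (by positivity)
      _ = ((n+3:ℕ):ℝ)^2 * I₂ (n+3) := by rw [hcast]
  · intro n
    have h1 := I2_ub n
    calc ((n+3:ℕ):ℝ)^2 * I₂ (n+3) = ((n:ℝ)+3)^2 * I₂ (n+3) := by rw [hcast]
      _ ≤ lo n + t2 n + t3 n := by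
          have := mul_le_mul_of_nonneg_left h1 (by positivity : (0:ℝ) ≤ ((n:ℝ)+3)^2)
          simp only [hlo_def, ht2_def, ht3_def]
          linarith [this]

theorem fluctuation_term_asymptotic :
    Tendsto (fun N : ℕ => (N : ℝ) ^ 2 * (I₂ N + (I₁ N) ^ 2))
      atTop (nhds (3 * Real.pi ^ 2 / 4)) := by
  have h := tendstoB.add (tendstoA.pow 2)
  have hval : π^2/2 + (π/2)^2 = 3 * Real.pi ^ 2 / 4 := by ring
  rw [hval] at h
  apply h.congr
  intro N
  ring
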